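/- arXiv:1907.02286 — 2 statements merged into one kernel-verified Lean document; each statement's English description precedes it below -/
import Mathlib

section
/- Let f : ℝⁿ → ℝ be bounded and uniformly continuous with modulus of continuity ω_f satisfying ω_f(t) ≤ a·t + b for all t ≥ 0, with a > 0 and b ≥ 0. Let h > 0, n ≥ 1, λ > 0. Then for every point x_k of the grid hℤⁿ: |M_λ^h(f)(x_k) − M_λ(f)(x_k)| ≤ ω_f(h√n) + 2λh²n + 2h√λ·d(λ), where d(λ) = √(ω_f(a/λ + √(b/λ))). -/
/-!
Every grid candidate `f(x_k + rh) + λh²|r|²` of the discrete envelope is a candidate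
`f(y) + λ|y − x_k|²` of the continuous one, so `M_λ(f)(x_k) ≤ M_λ^h(f)(x_k)`. Conversely, rounding
each coordinate of `y − x_k` toward zero to a multiple of `h` gives a grid point `z` with
`|z − x_k| ≤ |y − x_k|` and `|z − y| ≤ h√n`, hence `M_λ^h(f)(x_k) ≤ M_λ(f)(x_k) + ω_f(h√n)`.
The two remaining terms of the bound are nonnegative.
-/

noncomputable section

/-- Global lower Moreau envelope `M_λ(f)(x) = inf_{y∈ℝⁿ} {f(y) + λ|y−x|²}`. -/
def moreauLower {n : ℕ} (lam : ℝ) (f : EuclideanSpace ℝ (Fin n) → ℝ)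
    (x : EuclideanSpace ℝ (Fin n)) : ℝ :=
  ⨅ y : EuclideanSpace ℝ (Fin n), (f y + lam * ‖y - x‖ ^ 2)

/-- The grid point `x_k = h·k` of the grid `hℤⁿ`. -/
def gridPt {n : ℕ} (h : ℝ) (k : Fin n → ℤ) : EuclideanSpace ℝ (Fin n) :=
  (WithLp.equiv 2 (Fin n → ℝ)).symm (fun i => h * (k i))

/-- The discrete lower Moreau envelope at the grid point `x_k`:
`M_λ^h(f)(x_k) = inf {f(x_k + r·h) + λh²|r|² : r ∈ ℤⁿ}`. -/
def moreauLowerDiscrete {n : ℕ} (lam h : ℝ) (f : EuclideanSpace ℝ (Fin n) → ℝ)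
    (k : Fin n → ℤ) : ℝ :=
  ⨅ r : Fin n → ℤ, (f (gridPt h (k + r)) + lam * h ^ 2 * ‖gridPt 1 r‖ ^ 2)

/-- The modulus of continuity `ω_f(t) = sup {|f(x) − f(y)| : |x − y| ≤ t}`. -/
def modCont {n : ℕ} (f : EuclideanSpace ℝ (Fin n) → ℝ) (t : ℝ) : ℝ :=
  sSup {d : ℝ | ∃ x y : EuclideanSpace ℝ (Fin n), ‖x - y‖ ≤ t ∧ d = |f x - f y|}

open Set

lemma exists_int_abs_le_abs_sub_le_one (t : ℝ) :
    ∃ m : ℤ, |(m : ℝ)| ≤ |t| ∧ |(m : ℝ) - t| ≤ 1 := by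
  rcases le_total 0 t with ht | ht
  · refine ⟨⌊t⌋, ?_, ?_⟩
    · rw [abs_of_nonneg ht, abs_of_nonneg (by exact_mod_cast Int.floor_nonneg.mpr ht)]
      exact Int.floor_le t
    · rw [abs_le]
      constructor <;> linarith [Int.sub_one_lt_floor t, Int.floor_le t]
  · refine ⟨⌈t⌉, ?_, ?_⟩
    · have hceil : (⌈t⌉ : ℝ) ≤ 0 := by exact_mod_cast Int.ceil_le.mpr (by exact_mod_cast ht)
      rw [abs_of_nonpos ht, abs_of_nonpos hceil]
      exact neg_le_neg (Int.le_ceil t)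
    · rw [abs_le]
      constructor <;> linarith [Int.le_ceil t, Int.ceil_lt_add_one t]

lemma exists_int_abs_mul_le_abs_sub_le {h : ℝ} (hh : 0 < h) (s : ℝ) :
    ∃ m : ℤ, |h * m| ≤ |s| ∧ |h * m - s| ≤ h := by
  obtain ⟨m, hm, hm'⟩ := exists_int_abs_le_abs_sub_le_one (s / h)
  refine ⟨m, ?_, ?_⟩
  · calc |h * m| = h * |(m : ℝ)| := by rw [abs_mul, abs_of_pos hh]
      _ ≤ h * |s / h| := by gcongr
      _ = |s| := by rw [abs_div, abs_of_pos hh]; field_simp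
  · calc |h * m - s| = h * |(m : ℝ) - s / h| := by
          rw [← abs_of_pos hh, ← abs_mul, abs_of_pos hh, mul_sub, mul_div_cancel₀ _ hh.ne']
      _ ≤ h := by simpa using mul_le_mul_of_nonneg_left hm' hh.le

namespace EuclideanSpace

variable {ι : Type*} [Fintype ι]

lemma norm_le_norm_of_forall_abs_le {u v : EuclideanSpace ℝ ι} (huv : ∀ i, |u i| ≤ |v i|) :
    ‖u‖ ≤ ‖v‖ := by
  rw [EuclideanSpace.norm_eq, EuclideanSpace.norm_eq]
  gcongr with i
  simpa only [Real.norm_eq_abs] using huv i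

lemma norm_le_sqrt_card_mul {u : EuclideanSpace ℝ ι} {c : ℝ} (hc : 0 ≤ c)
    (hu : ∀ i, |u i| ≤ c) : ‖u‖ ≤ √(Fintype.card ι) * c := by
  rw [EuclideanSpace.norm_eq, ← Real.sqrt_sq hc, ← Real.sqrt_mul (Nat.cast_nonneg _)]
  gcongr
  calc ∑ i, ‖u i‖ ^ 2 ≤ ∑ _i : ι, c ^ 2 := by
        gcongr with i
        exact (Real.norm_eq_abs _).trans_le (hu i)
    _ = Fintype.card ι * c ^ 2 := by simp

end EuclideanSpace

section Grid

variable {n : ℕ}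

@[simp]
lemma gridPt_apply (h : ℝ) (k : Fin n → ℤ) (i : Fin n) : gridPt h k i = h * k i := rfl

lemma gridPt_add_sub_gridPt (h : ℝ) (k r : Fin n → ℤ) :
    gridPt h (k + r) - gridPt h k = h • gridPt 1 r := by
  ext i
  simp only [PiLp.sub_apply, PiLp.smul_apply, gridPt_apply, Pi.add_apply, Int.cast_add,
    smul_eq_mul]
  ring

lemma exists_gridPt_near {h : ℝ} (hh : 0 < h) (k : Fin n → ℤ) (y : EuclideanSpace ℝ (Fin n)) :
    ∃ r : Fin n → ℤ, ‖gridPt h (k + r) - gridPt h k‖ ≤ ‖y - gridPt h k‖ ∧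
      ‖gridPt h (k + r) - y‖ ≤ h * √n := by
  choose r hr_abs hr_sub using fun i => exists_int_abs_mul_le_abs_sub_le hh (y i - h * k i)
  have hstep : ∀ i, (gridPt h (k + r) - gridPt h k) i = h * r i := fun i => by
    simp only [WithLp.ofLp_sub, Pi.sub_apply, gridPt_apply, Pi.add_apply]
    push_cast
    ring
  refine ⟨r, EuclideanSpace.norm_le_norm_of_forall_abs_le fun i => ?_, ?_⟩
  · simpa only [hstep, WithLp.ofLp_sub, Pi.sub_apply, gridPt_apply] using hr_abs i
  · rw [mul_comm, ← sub_sub_sub_cancel_right _ y (gridPt h k)]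
    convert EuclideanSpace.norm_le_sqrt_card_mul hh.le fun i => ?_
    · exact (Fintype.card_fin n).symm
    rw [WithLp.ofLp_sub, Pi.sub_apply, hstep]
    simpa only [WithLp.ofLp_sub, Pi.sub_apply, gridPt_apply] using hr_sub i

end Grid

section Envelope

variable {n : ℕ} {f : EuclideanSpace ℝ (Fin n) → ℝ} {lam : ℝ}

lemma bddBelow_range_of_abs_le {ι : Type*} {g : ι → ℝ} {C : ℝ} (hC : ∀ i, |g i| ≤ C) :
    BddBelow (range g) :=
  ⟨-C, forall_mem_range.mpr fun i => (abs_le.mp (hC i)).1⟩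

lemma bddBelow_range_add_mul_sq {ι : Type*} {g : ι → ℝ} (hg : BddBelow (range g))
    (hlam : 0 ≤ lam) (d : ι → ℝ) : BddBelow (range fun i => g i + lam * d i ^ 2) := by
  obtain ⟨C, hC⟩ := hg
  refine ⟨C, ?_⟩
  rintro _ ⟨i, rfl⟩
  have := hC (mem_range_self i)
  dsimp only
  nlinarith [sq_nonneg (d i)]

lemma moreauLowerDiscrete_eq_iInf (lam h : ℝ) (f : EuclideanSpace ℝ (Fin n) → ℝ)
    (k : Fin n → ℤ) :
    moreauLowerDiscrete lam h f k =
      ⨅ r : Fin n → ℤ, (f (gridPt h (k + r)) + lam * ‖gridPt h (k + r) - gridPt h k‖ ^ 2) := by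
  simp only [moreauLowerDiscrete, gridPt_add_sub_gridPt, norm_smul, mul_pow, Real.norm_eq_abs,
    sq_abs, mul_assoc]

lemma moreauLower_le_moreauLowerDiscrete (hf : BddBelow (range f)) (hlam : 0 ≤ lam) (h : ℝ)
    (k : Fin n → ℤ) : moreauLower lam f (gridPt h k) ≤ moreauLowerDiscrete lam h f k := by
  rw [moreauLowerDiscrete_eq_iInf]
  exact le_ciInf fun r => ciInf_le (bddBelow_range_add_mul_sq hf hlam _) _

lemma abs_sub_le_modCont {C : ℝ} (hC : ∀ x, |f x| ≤ C) {t : ℝ}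
    {u v : EuclideanSpace ℝ (Fin n)} (huv : ‖u - v‖ ≤ t) : |f u - f v| ≤ modCont f t := by
  refine le_csSup ⟨2 * C, ?_⟩ ⟨u, v, huv, rfl⟩
  rintro _ ⟨p, q, -, rfl⟩
  linarith [abs_sub (f p) (f q), hC p, hC q]

lemma moreauLowerDiscrete_le_moreauLower_add_modCont {C : ℝ} (hC : ∀ x, |f x| ≤ C)
    (hlam : 0 ≤ lam) {h : ℝ} (hh : 0 < h) (k : Fin n → ℤ) :
    moreauLowerDiscrete lam h f k ≤ moreauLower lam f (gridPt h k) + modCont f (h * √n) := by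
  rw [← sub_le_iff_le_add]
  refine le_ciInf fun y => sub_le_iff_le_add.mpr ?_
  obtain ⟨r, hr_center, hr_near⟩ := exists_gridPt_near hh k y
  have hf_near := (abs_le.mp (abs_sub_le_modCont hC hr_near)).2
  have hquad : lam * ‖gridPt h (k + r) - gridPt h k‖ ^ 2 ≤ lam * ‖y - gridPt h k‖ ^ 2 := by
    gcongr
  rw [moreauLowerDiscrete_eq_iInf]
  refine (ciInf_le (bddBelow_range_add_mul_sq (bddBelow_range_of_abs_le fun _ => hC _) hlam _)
    r).trans ?_
  linarith

end Envelope

theorem discrete_moreau_error_modCont_general {n : ℕ}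
    (f : EuclideanSpace ℝ (Fin n) → ℝ)
    (hb : ∃ C : ℝ, ∀ x : EuclideanSpace ℝ (Fin n), |f x| ≤ C)
    (a b : ℝ)
    (h lam : ℝ) (hh : 0 < h) (hlam : 0 < lam) :
    ∀ k : Fin n → ℤ,
      |moreauLowerDiscrete lam h f k - moreauLower lam f (gridPt h k)|
        ≤ modCont f (h * Real.sqrt n) + 2 * lam * h ^ 2 * n
          + 2 * h * Real.sqrt lam * Real.sqrt (modCont f (a / lam + Real.sqrt (b / lam))) := by
  intro k
  obtain ⟨C, hC⟩ := hb
  have hlower := moreauLower_le_moreauLowerDiscrete (bddBelow_range_of_abs_le hC) hlam.le h k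
  have hupper := moreauLowerDiscrete_le_moreauLower_add_modCont hC hlam.le hh k
  rw [abs_of_nonneg (sub_nonneg.mpr hlower)]
  have hquad_term : 0 ≤ 2 * lam * h ^ 2 * n := by positivity
  have hsqrt_term : 0 ≤ 2 * h * √lam * √(modCont f (a / lam + √(b / lam))) := by positivity
  linarith

/-- Error estimate for the discrete Moreau envelope of a bounded uniformly continuous
function with modulus of continuity `ω_f(t) ≤ a·t + b`:
`|M_λ^h(f)(x_k) − M_λ(f)(x_k)| ≤ ω_f(h√n) + 2λh²n + 2h√λ·d(λ)` with
`d(λ) = √(ω_f(a/λ + √(b/λ)))`. -/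
theorem discrete_moreau_error_modCont {n : ℕ} (hn : 1 ≤ n)
    (f : EuclideanSpace ℝ (Fin n) → ℝ)
    (hb : ∃ C : ℝ, ∀ x : EuclideanSpace ℝ (Fin n), |f x| ≤ C)
    (huc : UniformContinuous f)
    (a b : ℝ) (ha : 0 < a) (hb' : 0 ≤ b)
    (hω : ∀ t : ℝ, 0 ≤ t → modCont f t ≤ a * t + b)
    (h lam : ℝ) (hh : 0 < h) (hlam : 0 < lam) :
    ∀ k : Fin n → ℤ,
      |moreauLowerDiscrete lam h f k - moreauLower lam f (gridPt h k)|
        ≤ modCont f (h * Real.sqrt n) + 2 * lam * h ^ 2 * n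
          + 2 * h * Real.sqrt lam * Real.sqrt (modCont f (a / lam + Real.sqrt (b / lam))) :=
  discrete_moreau_error_modCont_general f hb a b h lam hh hlam
end
end

section
/- Let f : ℝⁿ → ℝ be bounded, λ > 0, h > 0. Define the sequence of functions on the grid hℤⁿ by f_0(x_k) = f(x_k) and, for i ≥ 1, f_i(x_k) = min{ f_{i−1}(x_k + r·h) + λh²|r|²·(2i − 1) : r ∈ ℤⁿ, |r|_∞ ≤ 1 }. Also define g_m(x_k) = inf{ f(x_k + r·h) + λh²|r|² : r ∈ ℤⁿ, |r|_∞ ≤ m }. Then f_m(x_k) = g_m(x_k) for all grid points x_k and all m = 0, 1, 2, …. Moreover, if m ≥ ⌊(1/h)·√(osc(f)/λ)⌋ + 1, where osc(f) = sup f − inf f and ⌊·⌋ is the integer part, then g_m(x_k) = M_λ^h(f)(x_k) = inf{f(x_k + r·h) + λh²|r|² : r ∈ ℤⁿ} for every grid point x_k. -/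
noncomputable section

/-- The iterative scheme: `f_0(x_k) = f(x_k)` and, for `i ≥ 1`,
`f_i(x_k) = min {f_{i−1}(x_k + r·h) + λh²|r|²·(2i − 1) : r ∈ ℤⁿ, |r|_∞ ≤ 1}`. -/
def iterSeq {n : ℕ} (lam h : ℝ) (f : EuclideanSpace ℝ (Fin n) → ℝ) :
    ℕ → (Fin n → ℤ) → ℝ
  | 0 => fun k => f (gridPt h k)
  | (i + 1) => fun k => sInf {v : ℝ | ∃ r : Fin n → ℤ, (∀ j, |r j| ≤ 1) ∧
      v = iterSeq lam h f i (k + r)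
            + lam * h ^ 2 * ‖gridPt 1 r‖ ^ 2 * (2 * ((i : ℝ) + 1) - 1)}

/-- The `m`-th approximation of the discrete Moreau envelope:
`g_m(x_k) = inf {f(x_k + r·h) + λh²|r|² : r ∈ ℤⁿ, |r|_∞ ≤ m}`. -/
def approxSeq {n : ℕ} (lam h : ℝ) (f : EuclideanSpace ℝ (Fin n) → ℝ)
    (m : ℕ) (k : Fin n → ℤ) : ℝ :=
  sInf {v : ℝ | ∃ r : Fin n → ℤ, (∀ j, |r j| ≤ (m : ℤ)) ∧
    v = f (gridPt h (k + r)) + lam * h ^ 2 * ‖gridPt 1 r‖ ^ 2}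

/-- Squared euclidean norm of a grid vector with spacing `1`. -/
lemma moreau_normsq {n : ℕ} (r : Fin n → ℤ) :
    ‖gridPt 1 r‖ ^ 2 = ∑ j, ((r j : ℝ)) ^ 2 := by
  rw [EuclideanSpace.norm_eq, Real.sq_sqrt (Finset.sum_nonneg fun _ _ => sq_nonneg _)]
  refine Finset.sum_congr rfl fun j _ => ?_
  simp [gridPt, sq_abs]

lemma moreau_normsq_zero {n : ℕ} : ‖gridPt 1 (0 : Fin n → ℤ)‖ ^ 2 = 0 := by
  simp [moreau_normsq]

lemma moreau_coord_up (i : ℤ) (hi : 0 ≤ i) (a : ℤ) (ha : |a| ≤ i + 1) :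
    ∃ s : ℤ, |s| ≤ 1 ∧ |a - s| ≤ i ∧
      a ^ 2 = (a - s) ^ 2 + (2 * i + 1) * s ^ 2 := by
  obtain ⟨ha1, ha2⟩ := abs_le.mp ha
  rcases eq_or_ne a (i + 1) with hc | hc
  · subst hc
    exact ⟨1, by norm_num, by rw [abs_le]; omega, by ring⟩
  rcases eq_or_ne a (-(i + 1)) with hc2 | hc2
  · subst hc2
    exact ⟨-1, by norm_num, by rw [abs_le]; omega, by ring⟩
  · exact ⟨0, by norm_num, by rw [abs_le]; omega, by ring⟩

lemma moreau_coord_down (i s t : ℤ) (hs : |s| ≤ 1) (ht : |t| ≤ i) :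
    (s + t) ^ 2 ≤ t ^ 2 + (2 * i + 1) * s ^ 2 := by
  obtain ⟨h1, h2⟩ := abs_le.mp hs
  obtain ⟨h3, h4⟩ := abs_le.mp ht
  interval_cases s
  · nlinarith
  · simp
  · nlinarith

/-- The defining set of `approxSeq`. -/
def ASet {n : ℕ} (lam h : ℝ) (f : EuclideanSpace ℝ (Fin n) → ℝ)
    (m : ℤ) (k : Fin n → ℤ) : Set ℝ :=
  {v : ℝ | ∃ r : Fin n → ℤ, (∀ j, |r j| ≤ m) ∧
    v = f (gridPt h (k + r)) + lam * h ^ 2 * ‖gridPt 1 r‖ ^ 2}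

lemma approxSeq_eq_sInf_ASet {n : ℕ} (lam h : ℝ) (f : EuclideanSpace ℝ (Fin n) → ℝ)
    (m : ℕ) (k : Fin n → ℤ) : approxSeq lam h f m k = sInf (ASet lam h f (m : ℤ) k) := rfl

lemma mem_ASet {n : ℕ} {lam h : ℝ} {f : EuclideanSpace ℝ (Fin n) → ℝ} {m : ℤ}
    {k : Fin n → ℤ} (r : Fin n → ℤ) (hr : ∀ j, |r j| ≤ m) :
    f (gridPt h (k + r)) + lam * h ^ 2 * ‖gridPt 1 r‖ ^ 2 ∈ ASet lam h f m k :=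
  ⟨r, hr, rfl⟩

lemma ASet_nonempty {n : ℕ} (lam h : ℝ) (f : EuclideanSpace ℝ (Fin n) → ℝ)
    (m : ℤ) (hm : 0 ≤ m) (k : Fin n → ℤ) : (ASet lam h f m k).Nonempty :=
  ⟨_, mem_ASet 0 fun j => by simpa using hm⟩

lemma ASet_lb {n : ℕ} {lam h : ℝ} {f : EuclideanSpace ℝ (Fin n) → ℝ} {C : ℝ}
    (hC : ∀ x, |f x| ≤ C) (hlam : 0 ≤ lam) (m : ℤ) (k : Fin n → ℤ) :
    ∀ v ∈ ASet lam h f m k, -C ≤ v := by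
  rintro v ⟨r, hr, rfl⟩
  have h1 := (abs_le.mp (hC (gridPt h (k + r)))).1
  have h2 : 0 ≤ lam * h ^ 2 * ‖gridPt 1 r‖ ^ 2 := by positivity
  linarith

lemma ASet_bddBelow {n : ℕ} {lam h : ℝ} {f : EuclideanSpace ℝ (Fin n) → ℝ} {C : ℝ}
    (hC : ∀ x, |f x| ≤ C) (hlam : 0 ≤ lam) (m : ℤ) (k : Fin n → ℤ) :
    BddBelow (ASet lam h f m k) :=
  ⟨-C, fun v hv => ASet_lb hC hlam m k v hv⟩

lemma approxSeq_lb {n : ℕ} {lam h : ℝ} {f : EuclideanSpace ℝ (Fin n) → ℝ} {C : ℝ}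
    (hC : ∀ x, |f x| ≤ C) (hlam : 0 ≤ lam) (m : ℕ) (k : Fin n → ℤ) :
    -C ≤ approxSeq lam h f m k := by
  rw [approxSeq_eq_sInf_ASet]
  exact le_csInf (ASet_nonempty lam h f m (Int.natCast_nonneg _) k) (ASet_lb hC hlam _ k)

/-- For bounded `f`, the iterative scheme computes the `m`-th approximation:
`f_m(x_k) = g_m(x_k)` for all grid points and all `m`; moreover, for
`m ≥ ⌊(1/h)√(osc(f)/λ)⌋ + 1`, `g_m(x_k) = M_λ^h(f)(x_k)` at every grid point. -/
theorem iterSeq_eq_approx_and_reaches_discrete_moreau {n : ℕ}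
    (f : EuclideanSpace ℝ (Fin n) → ℝ)
    (hb : ∃ C : ℝ, ∀ x : EuclideanSpace ℝ (Fin n), |f x| ≤ C)
    (lam h : ℝ) (hlam : 0 < lam) (hh : 0 < h) :
    (∀ m : ℕ, ∀ k : Fin n → ℤ, iterSeq lam h f m k = approxSeq lam h f m k) ∧
    (∀ m : ℕ,
      Nat.floor ((1 / h) * Real.sqrt ((sSup (Set.range f) - sInf (Set.range f)) / lam)) + 1 ≤ m →
      ∀ k : Fin n → ℤ, approxSeq lam h f m k = moreauLowerDiscrete lam h f k) := by
  obtain ⟨C, hC⟩ := hb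
  have part1 : ∀ m : ℕ, ∀ k : Fin n → ℤ, iterSeq lam h f m k = approxSeq lam h f m k := by
    intro m
    induction m with
    | zero =>
      intro k
      show f (gridPt h k) = sInf (ASet lam h f ((0 : ℕ) : ℤ) k)
      refine le_antisymm ?_ ?_
      · refine le_csInf (ASet_nonempty lam h f _ (by simp) k) ?_
        rintro v ⟨r, hr, rfl⟩
        have hr0 : r = 0 := funext fun j => by
          have h1 := hr j; simp only [Nat.cast_zero] at h1
          have h2 := abs_le.mp h1
          simp only [Pi.zero_apply]; omega
        subst hr0
        simp [moreau_normsq_zero]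
      · have hmem := mem_ASet (lam := lam) (h := h) (f := f) (m := ((0:ℕ):ℤ)) (k := k) 0
          (fun j => by simp)
        have := csInf_le (ASet_bddBelow hC hlam.le _ k) hmem
        simpa [moreau_normsq_zero] using this
    | succ i ih =>
      intro k
      have hstep : iterSeq lam h f (i + 1) k = sInf {v : ℝ | ∃ s : Fin n → ℤ,
          (∀ j, |s j| ≤ 1) ∧ v = approxSeq lam h f i (k + s)
            + lam * h ^ 2 * ‖gridPt 1 s‖ ^ 2 * (2 * ((i : ℝ) + 1) - 1)} := by
        show sInf _ = sInf _
        congr 1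
        ext v
        constructor
        · rintro ⟨s, hs, rfl⟩; exact ⟨s, hs, by rw [ih]⟩
        · rintro ⟨s, hs, rfl⟩; exact ⟨s, hs, by rw [ih]⟩
      rw [hstep, approxSeq_eq_sInf_ASet]
      set T : Set ℝ := {v : ℝ | ∃ s : Fin n → ℤ, (∀ j, |s j| ≤ 1) ∧
          v = approxSeq lam h f i (k + s)
            + lam * h ^ 2 * ‖gridPt 1 s‖ ^ 2 * (2 * ((i : ℝ) + 1) - 1)} with hT
      have hwpos : (0 : ℝ) ≤ 2 * ((i : ℝ) + 1) - 1 := by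
        have : (0:ℝ) ≤ (i : ℝ) := Nat.cast_nonneg i
        linarith
      have hTlb : ∀ v ∈ T, -C ≤ v := by
        rintro v ⟨s, hs, rfl⟩
        have h1 := approxSeq_lb (lam := lam) (h := h) hC hlam.le i (k + s)
        have h2 : 0 ≤ lam * h ^ 2 * ‖gridPt 1 s‖ ^ 2 * (2 * ((i : ℝ) + 1) - 1) := by positivity
        linarith
      have hTbdd : BddBelow T := ⟨-C, hTlb⟩
      have hTne : T.Nonempty := ⟨_, 0, fun j => by simp, rfl⟩
      refine le_antisymm ?_ ?_
      · -- sInf T ≤ sInf (ASet (i+1))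
        refine le_csInf (ASet_nonempty lam h f _ (Int.natCast_nonneg _) k) ?_
        rintro v ⟨r, hr, rfl⟩
        choose s hs1 hs2 hs3 using fun j =>
          moreau_coord_up (i : ℤ) (by positivity) (r j) (by
            have := hr j; push_cast at this ⊢; linarith)
        -- real reformulation of the coordinatewise identity
        have hsum : ‖gridPt 1 r‖ ^ 2 = ‖gridPt 1 (r - s)‖ ^ 2
            + ‖gridPt 1 s‖ ^ 2 * (2 * ((i : ℝ) + 1) - 1) := by
          rw [moreau_normsq, moreau_normsq, moreau_normsq, Finset.sum_mul,
            ← Finset.sum_add_distrib]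
          refine Finset.sum_congr rfl fun j _ => ?_
          have := hs3 j
          have h' : ((r j : ℝ)) ^ 2 = ((r j : ℝ) - (s j : ℝ)) ^ 2
              + (2 * (i : ℝ) + 1) * ((s j : ℝ)) ^ 2 := by exact_mod_cast this
          simp only [Pi.sub_apply]
          push_cast
          linarith [h']
        have step1 : sInf T ≤ approxSeq lam h f i (k + s)
            + lam * h ^ 2 * ‖gridPt 1 s‖ ^ 2 * (2 * ((i : ℝ) + 1) - 1) :=
          csInf_le hTbdd ⟨s, hs1, rfl⟩
        have step2 : approxSeq lam h f i (k + s) ≤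
            f (gridPt h ((k + s) + (r - s))) + lam * h ^ 2 * ‖gridPt 1 (r - s)‖ ^ 2 := by
          rw [approxSeq_eq_sInf_ASet]
          exact csInf_le (ASet_bddBelow hC hlam.le _ _) (mem_ASet (r - s) fun j => hs2 j)
        have hidx : (k + s) + (r - s) = k + r := by abel
        rw [hidx] at step2
        calc sInf T ≤ _ := step1
          _ ≤ f (gridPt h (k + r)) + lam * h ^ 2 * ‖gridPt 1 (r - s)‖ ^ 2
              + lam * h ^ 2 * ‖gridPt 1 s‖ ^ 2 * (2 * ((i : ℝ) + 1) - 1) := by linarith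
          _ = f (gridPt h (k + r)) + lam * h ^ 2 * ‖gridPt 1 r‖ ^ 2 := by
              rw [hsum]; ring
      · -- sInf (ASet (i+1)) ≤ sInf T
        refine le_csInf hTne ?_
        rintro v ⟨s, hs, rfl⟩
        have key : sInf (ASet lam h f ((i + 1 : ℕ) : ℤ) k)
            - lam * h ^ 2 * ‖gridPt 1 s‖ ^ 2 * (2 * ((i : ℝ) + 1) - 1)
            ≤ approxSeq lam h f i (k + s) := by
          rw [approxSeq_eq_sInf_ASet]
          refine le_csInf (ASet_nonempty lam h f _ (Int.natCast_nonneg _) _) ?_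
          rintro w ⟨r', hr', rfl⟩
          have hmem : f (gridPt h (k + (s + r')))
              + lam * h ^ 2 * ‖gridPt 1 (s + r')‖ ^ 2 ∈ ASet lam h f ((i + 1 : ℕ) : ℤ) k := by
            refine mem_ASet (s + r') fun j => ?_
            have h1 := abs_le.mp (hs j)
            have h2 := abs_le.mp (hr' j)
            simp only [Pi.add_apply]
            rw [abs_le]; push_cast; push_cast at h2; omega
          have hle := csInf_le (ASet_bddBelow hC hlam.le _ k) hmem
          have hsum : ‖gridPt 1 (s + r')‖ ^ 2 ≤ ‖gridPt 1 r'‖ ^ 2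
              + ‖gridPt 1 s‖ ^ 2 * (2 * ((i : ℝ) + 1) - 1) := by
            rw [moreau_normsq, moreau_normsq, moreau_normsq, Finset.sum_mul,
              ← Finset.sum_add_distrib]
            refine Finset.sum_le_sum fun j _ => ?_
            have hz := moreau_coord_down (i : ℤ) (s j) (r' j) (hs j) (hr' j)
            have h' : ((s j : ℝ) + (r' j : ℝ)) ^ 2 ≤ ((r' j : ℝ)) ^ 2
                + (2 * (i : ℝ) + 1) * ((s j : ℝ)) ^ 2 := by exact_mod_cast hz
            simp only [Pi.add_apply]
            push_cast
            linarith [h']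
          have hidx : gridPt h (k + (s + r')) = gridPt h ((k + s) + r') := by
            rw [add_assoc]
          rw [hidx] at hle
          have hmul : lam * h ^ 2 * ‖gridPt 1 (s + r')‖ ^ 2 ≤ lam * h ^ 2 * (‖gridPt 1 r'‖ ^ 2
              + ‖gridPt 1 s‖ ^ 2 * (2 * ((i : ℝ) + 1) - 1)) := by
            have : (0:ℝ) ≤ lam * h ^ 2 := by positivity
            exact mul_le_mul_of_nonneg_left hsum this
          nlinarith [hle, hmul]
        linarith [key]
  refine ⟨part1, ?_⟩
  intro m hm k
  set M := sSup (Set.range f) with hM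
  set I := sInf (Set.range f) with hI
  have hba : BddAbove (Set.range f) := ⟨C, by rintro _ ⟨x, rfl⟩; exact (abs_le.mp (hC x)).2⟩
  have hbb : BddBelow (Set.range f) := ⟨-C, by rintro _ ⟨x, rfl⟩; exact (abs_le.mp (hC x)).1⟩
  have hIle : ∀ x, I ≤ f x := fun x => csInf_le hbb ⟨x, rfl⟩
  have hMge : ∀ x, f x ≤ M := fun x => le_csSup hba ⟨x, rfl⟩
  have hosc : 0 ≤ M - I := by
    have := hIle (gridPt h k); have := hMge (gridPt h k); linarith
  set x := (1 / h) * Real.sqrt ((M - I) / lam) with hx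
  have hxnn : 0 ≤ x := by positivity
  have hxm : x < (m : ℝ) := by
    have h1 : x < (Nat.floor x : ℝ) + 1 := Nat.lt_floor_add_one x
    have h2 : ((Nat.floor x + 1 : ℕ) : ℝ) ≤ (m : ℝ) := by exact_mod_cast hm
    push_cast at h2
    linarith
  have hxsq : lam * h ^ 2 * x ^ 2 = M - I := by
    rw [hx, mul_pow, Real.sq_sqrt (by positivity)]
    field_simp
  have hFlb : ∀ r : Fin n → ℤ,
      -C ≤ f (gridPt h (k + r)) + lam * h ^ 2 * ‖gridPt 1 r‖ ^ 2 := by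
    intro r
    have h1 := (abs_le.mp (hC (gridPt h (k + r)))).1
    have h2 : 0 ≤ lam * h ^ 2 * ‖gridPt 1 r‖ ^ 2 := by positivity
    linarith
  rw [approxSeq_eq_sInf_ASet, moreauLowerDiscrete]
  refine le_antisymm ?_ ?_
  · -- sInf (ASet m) ≤ ⨅ r, F r
    refine le_ciInf fun r => ?_
    by_cases hcase : ∀ j, |r j| ≤ (m : ℤ)
    · exact csInf_le (ASet_bddBelow hC hlam.le _ k) (mem_ASet r hcase)
    · push_neg at hcase
      obtain ⟨j0, hj0⟩ := hcase
      have h0 : sInf (ASet lam h f (m : ℤ) k) ≤ f (gridPt h k) := by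
        have hmem := mem_ASet (lam := lam) (h := h) (f := f) (m := (m : ℤ)) (k := k) 0
          (fun j => by simp only [Pi.zero_apply, abs_zero]; exact Int.natCast_nonneg m)
        have := csInf_le (ASet_bddBelow hC hlam.le _ k) hmem
        simpa [moreau_normsq_zero] using this
      -- the excluded term is large
      have habs : (m : ℝ) + 1 ≤ |(r j0 : ℝ)| := by
        have : (m : ℤ) + 1 ≤ |r j0| := hj0
        calc ((m : ℝ) + 1) = (((m : ℤ) + 1 : ℤ) : ℝ) := by push_cast; ring
          _ ≤ ((|r j0| : ℤ) : ℝ) := by exact_mod_cast this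
          _ = |(r j0 : ℝ)| := by push_cast; ring
      have hsq : ((m : ℝ) + 1) ^ 2 ≤ ((r j0 : ℝ)) ^ 2 := by
        rw [← sq_abs ((r j0 : ℝ))]
        exact pow_le_pow_left₀ (by positivity) habs 2
      have hsumge : ((r j0 : ℝ)) ^ 2 ≤ ‖gridPt 1 r‖ ^ 2 := by
        rw [moreau_normsq]
        exact Finset.single_le_sum (f := fun j => ((r j : ℝ)) ^ 2) (fun j _ => sq_nonneg _) (Finset.mem_univ j0)
      have hx2 : x ^ 2 ≤ ((m : ℝ)) ^ 2 := by nlinarith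
      have hbig : M - I ≤ lam * h ^ 2 * ‖gridPt 1 r‖ ^ 2 := by
        have hc : (0:ℝ) ≤ lam * h ^ 2 := by positivity
        nlinarith [mul_le_mul_of_nonneg_left hsumge hc]
      have := hIle (gridPt h (k + r))
      have := hMge (gridPt h k)
      linarith
  · refine le_csInf (ASet_nonempty lam h f _ (Int.natCast_nonneg _) k) ?_
    rintro v ⟨r, hr, rfl⟩
    exact ciInf_le ⟨-C, by rintro _ ⟨r', rfl⟩; exact hFlb r'⟩ r
end
end
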